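/- Let V ∈ L^∞, R_h = 1/(2h), v_n = (n+1/2)π/R_h for n ∈ ℤ, and define the infinite matrix A(x) = ((π/R_h)·V_w^{R_h}(x, v_n − v_m))_{n,m∈ℤ} where V_w^{R_h}(x,v) = (i/2π)∫_{B(0,R_h)} D_V(x,y)e^{ivy}dy. Then A(x) defines a bounded linear operator on ℓ²(ℤ) with ‖A(x)‖ ≤ 2‖V‖_{L^∞}, uniformly in x and h. -/

import Mathlib

/-!
With `D(y) = V(x + y/2) - V(x - y/2)`, the entry `(π/R) V_w^R(x, (n - m)π/R)` is the `(n - m)`-th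
Fourier coefficient of the symbol `g(y) = i D(-y)` on the circle `ℝ/2Rℤ` (identified with
`(-R, R]`), so `A(x)` is the Laurent matrix of `g`: it acts on Fourier coefficients as
multiplication by `g` acts on `L²` of the circle. Since `|g| ≤ 2M`, that multiplication has norm
at most `2M`, and Parseval's identity carries the bound to `ℓ²(ℤ)`.
-/

open MeasureTheory Real Complex

/-- The truncated Wigner potential
`V_w^R(x,v) = (i/2π) ∫_{B(0,R)} (V(x+y/2)−V(x−y/2)) e^{ivy} dy`. -/
noncomputable def VwR (V : ℝ → ℝ) (R x v : ℝ) : ℂ :=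
  (Complex.I / (2 * π)) * ∫ y in Set.Ioo (-R) R,
    ((V (x + y / 2) - V (x - y / 2) : ℝ) : ℂ) * Complex.exp (Complex.I * v * y)

open scoped InnerProductSpace ENNReal ComplexConjugate
open AddCircle

section Laurent

variable {T : ℝ} [Fact (0 < T)]

theorem fourierCoeff_eq_zero_of_not_aestronglyMeasurable {g : AddCircle T → ℂ}
    (hg : ¬AEStronglyMeasurable g haarAddCircle) (n : ℤ) : fourierCoeff g n = 0 := by
  refine integral_undef fun hint => hg ?_
  have := ((map_continuous (fourier n)).aestronglyMeasurable (μ := haarAddCircle)).mul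
    hint.aestronglyMeasurable
  refine this.congr (ae_of_all _ fun t => ?_)
  simp only [Pi.mul_apply, smul_eq_mul, ← mul_assoc, ← fourier_add, add_neg_cancel,
    fourier_zero, one_mul]

theorem fourierCoeff_mul_eq_tsum {g : AddCircle T → ℂ} (hg : MemLp g 2 haarAddCircle)
    (F : Lp ℂ 2 (haarAddCircle (T := T))) (n : ℤ) :
    fourierCoeff (fun t => g t * F t) n = ∑' m, fourierCoeff g (n - m) * fourierCoeff F m := by
  have hH : MemLp (fun t => conj (fourier (-n) t * g t)) 2 haarAddCircle := by
    refine hg.of_le ?_ (ae_of_all _ fun t => ?_)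
    · exact continuous_star.comp_aestronglyMeasurable
        ((map_continuous _).aestronglyMeasurable.mul hg.aestronglyMeasurable)
    simp [Circle.norm_coe]
  -- `H` is chosen so that `⟪H, F⟫` is the `n`-th coefficient of `g * F` and `⟪H, e_m⟫` is the
  -- `(n - m)`-th coefficient of `g`; Parseval in the Fourier basis then gives the convolution.
  obtain ⟨H, hHt⟩ : ∃ H : Lp ℂ 2 (haarAddCircle (T := T)),
      H =ᵐ[haarAddCircle] fun t => conj (fourier (-n) t * g t) :=
    ⟨hH.toLp _, hH.coeFn_toLp⟩
  have hHbasis : ∀ m, ⟪H, fourierBasis m⟫_ℂ = fourierCoeff g (n - m) := by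
    intro m
    rw [coe_fourierBasis, L2.inner_def]
    refine integral_congr_ae ?_
    filter_upwards [hHt, coeFn_fourierLp 2 m] with t hHt hmt
    simp only [hHt, hmt, RCLike.inner_apply, conj_conj, smul_eq_mul, sub_eq_add_neg, neg_add,
      neg_neg, fourier_add]
    ring
  have hHF : ⟪H, F⟫_ℂ = fourierCoeff (fun t => g t * F t) n := by
    rw [L2.inner_def]
    refine integral_congr_ae ?_
    filter_upwards [hHt] with t hHt
    simp only [hHt, RCLike.inner_apply, conj_conj, smul_eq_mul]
    ring
  rw [← hHF, ← fourierBasis.tsum_inner_mul_inner]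
  congr! 2 with m
  rw [hHbasis, ← fourierBasis_repr, fourierBasis.repr_apply_apply]

section Bounded

variable {g : AddCircle T → ℂ} {C : ℝ} (hg : AEStronglyMeasurable g haarAddCircle)
  (hgC : ∀ᵐ t ∂haarAddCircle, ‖g t‖ ≤ C) (F : Lp ℂ 2 (haarAddCircle (T := T)))
include hg hgC

theorem memLp_mul_of_bound : MemLp (fun t => g t * F t) 2 haarAddCircle :=
  (Lp.memLp F).of_le_mul (hg.mul (Lp.aestronglyMeasurable F))
    (hgC.mono fun t ht => by rw [norm_mul]; gcongr)

theorem summable_sq_fourierCoeff_mul :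
    Summable fun n => ‖fourierCoeff (fun t => g t * F t) n‖ ^ 2 := by
  have hP := memLp_mul_of_bound hg hgC F
  rw [fourierCoeff_congr_ae hP.coeFn_toLp.symm]
  exact (hasSum_sq_fourierCoeff _).summable

theorem tsum_sq_fourierCoeff_mul_le :
    ∑' n, ‖fourierCoeff (fun t => g t * F t) n‖ ^ 2 ≤ C ^ 2 * ∑' n, ‖fourierCoeff F n‖ ^ 2 := by
  have hP := memLp_mul_of_bound hg hgC F
  rw [fourierCoeff_congr_ae hP.coeFn_toLp.symm, tsum_sq_fourierCoeff, tsum_sq_fourierCoeff,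
    ← integral_const_mul]
  refine integral_mono_ae ((Lp.memLp _).integrable_norm_pow two_ne_zero)
    (((Lp.memLp F).integrable_norm_pow two_ne_zero).const_mul _) ?_
  filter_upwards [hP.coeFn_toLp, hgC] with t ht hgt
  rw [ht, norm_mul, mul_pow]
  gcongr

end Bounded

theorem tsum_ofReal_sq_fourierCoeff_conv_le {g : AddCircle T → ℂ} {C : ℝ}
    (hgC : ∀ t, ‖g t‖ ≤ C) (e : ℤ → ℂ) :
    ∑' n, ENNReal.ofReal (‖∑' m, fourierCoeff g (n - m) * e m‖ ^ 2)
      ≤ ENNReal.ofReal (C ^ 2) * ∑' m, ENNReal.ofReal (‖e m‖ ^ 2) := by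
  by_cases hg : AEStronglyMeasurable g haarAddCircle
  swap
  · simp [fourierCoeff_eq_zero_of_not_aestronglyMeasurable hg]
  rcases eq_or_ne (∑' m, ENNReal.ofReal (‖e m‖ ^ 2)) ∞ with he | he
  -- the right-hand side is `ofReal (C ^ 2) * ∞`, which is `0` when `C = 0`
  · obtain rfl | hC := ((norm_nonneg _).trans (hgC 0)).eq_or_lt
    · have hg0 : g = 0 := funext fun t => norm_le_zero_iff.mp (hgC t)
      simp [hg0, fourierCoeff]
    · rw [he, ENNReal.mul_top (by positivity)]
      exact le_top
  have he2 : Summable fun m => ‖e m‖ ^ 2 := by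
    simpa [ENNReal.toReal_ofReal, sq_nonneg] using ENNReal.summable_toReal he
  let F : Lp ℂ 2 (haarAddCircle (T := T)) :=
    fourierBasis.repr.symm ⟨e, memℓp_gen (by simpa using he2)⟩
  have hF : fourierCoeff F = e := by
    ext m
    rw [← fourierBasis_repr, LinearIsometryEquiv.apply_symm_apply]
  have hgC' : ∀ᵐ t ∂haarAddCircle, ‖g t‖ ≤ C := ae_of_all _ hgC
  have hconv : ∀ n,
      ∑' m, fourierCoeff g (n - m) * e m = fourierCoeff (fun t => g t * F t) n := by
    intro n
    rw [fourierCoeff_mul_eq_tsum (MemLp.of_bound hg C hgC') F n, hF]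
  simp only [hconv]
  rw [← ENNReal.ofReal_tsum_of_nonneg (fun _ => by positivity)
      (summable_sq_fourierCoeff_mul hg hgC' F),
    ← ENNReal.ofReal_tsum_of_nonneg (fun _ => by positivity) he2,
    ← ENNReal.ofReal_mul (sq_nonneg _)]
  refine ENNReal.ofReal_le_ofReal ?_
  simpa only [hF] using tsum_sq_fourierCoeff_mul_le hg hgC' F

end Laurent

-- The reflection `y ↦ -y` turns the kernel `e^{-iπky/R}` of `fourierCoeff` into the `e^{iπky/R}`
-- of the Wigner transform.
theorem fourierCoeff_liftIoc_comp_neg {R : ℝ} [Fact (0 < 2 * R)] (f : ℝ → ℂ) (k : ℤ) :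
    fourierCoeff (liftIoc (2 * R) (-R) fun y => f (-y)) k
      = 1 / (2 * R) * ∫ y in Set.Ioo (-R) R, f y * exp (I * ((k * π / R : ℝ) : ℂ) * y) := by
  have hR : 0 < R := by linarith [(Fact.out : 0 < 2 * R)]
  rw [fourierCoeff_liftIoc_eq, fourierCoeffOn_eq_integral]
  have hexp : ∀ x : ℝ, fourier (-k) (x : AddCircle (-R + 2 * R - -R)) • f (-x)
      = f (-x) * exp (I * ((k * π / R : ℝ) : ℂ) * ↑(-x)) := by
    intro x
    rw [fourier_coe_apply, smul_eq_mul, mul_comm]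
    congr 2
    push_cast
    field_simp
    ring
  rw [intervalIntegral.integral_congr fun x _ => hexp x,
    intervalIntegral.integral_comp_neg (fun y => f y * exp (I * ((k * π / R : ℝ) : ℂ) * y)),
    show -R + 2 * R = R by ring, neg_neg, intervalIntegral.integral_of_le (by linarith),
    integral_Ioc_eq_integral_Ioo, Complex.real_smul]
  push_cast
  ring_nf

theorem pi_div_mul_VwR_eq_fourierCoeff (V : ℝ → ℝ) {R : ℝ} [Fact (0 < 2 * R)] (x : ℝ) (k : ℤ) :
    (π / R : ℂ) * VwR V R x (k * π / R) = fourierCoeff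
      (liftIoc (2 * R) (-R) fun y => I * ((V (x - y / 2) - V (x + y / 2) : ℝ) : ℂ)) k := by
  have hR : 0 < R := by linarith [(Fact.out : 0 < 2 * R)]
  set D : ℝ → ℂ := fun y => I * ((V (x + y / 2) - V (x - y / 2) : ℝ) : ℂ)
  have hreflect :
      (fun y : ℝ => I * ((V (x - y / 2) - V (x + y / 2) : ℝ) : ℂ)) = fun y => D (-y) := by
    ext y
    simp only [D, neg_div, sub_neg_eq_add, ← sub_eq_add_neg]
  rw [hreflect, fourierCoeff_liftIoc_comp_neg D, VwR]
  simp_rw [D, mul_assoc I]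
  rw [integral_const_mul]
  field_simp

theorem matrix_A_bounded_general (V : ℝ → ℝ) (M : ℝ) (hV : ∀ t, |V t| ≤ M)
    (h : ℝ) (hh : 0 < h) (R : ℝ) (hR : R = 1 / (2 * h)) (x : ℝ) :
    ∀ e : ℤ → ℂ,
      ∑' n : ℤ, ENNReal.ofReal
          (‖∑' m : ℤ, (π / R) * VwR V R x (((n - m : ℤ)) * π / R) * e m‖ ^ 2)
        ≤ ENNReal.ofReal ((2 * M) ^ 2) * ∑' m : ℤ, ENNReal.ofReal (‖e m‖ ^ 2) := by
  intro e
  have : Fact (0 < 2 * R) := ⟨by rw [hR]; positivity⟩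
  have hD : ∀ a b, |V a - V b| ≤ 2 * M := fun a b => by
    linarith [abs_sub (V a) (V b), hV a, hV b]
  have hsymbol : ∀ t, ‖liftIoc (2 * R) (-R)
      (fun y => I * ((V (x - y / 2) - V (x + y / 2) : ℝ) : ℂ)) t‖ ≤ 2 * M := fun t => by
    rw [liftIoc, Function.comp_apply, Set.domRestrict_apply, norm_mul, norm_I, one_mul, norm_real,
      Real.norm_eq_abs]
    exact hD _ _
  simpa only [pi_div_mul_VwR_eq_fourierCoeff] using
    tsum_ofReal_sq_fourierCoeff_conv_le hsymbol e

/-- The infinite matrix `A(x) = ((π/R_h) V_w^{R_h}(x, v_n − v_m))_{n,m}` built on the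
shifted sampling points `v_n = (n+1/2)π/R_h` defines a bounded operator on `ℓ²(ℤ)`
with norm at most `2‖V‖_{L^∞}`, uniformly in `x` and `h`. -/
theorem matrix_A_bounded (V : ℝ → ℝ) (M : ℝ) (hM : 0 ≤ M) (hV : ∀ t, |V t| ≤ M)
    (h : ℝ) (hh : 0 < h) (R : ℝ) (hR : R = 1 / (2 * h)) (x : ℝ) :
    ∀ e : ℤ → ℂ,
      ∑' n : ℤ, ENNReal.ofReal
          (‖∑' m : ℤ, (π / R) * VwR V R x (((n - m : ℤ)) * π / R) * e m‖ ^ 2)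
        ≤ ENNReal.ofReal ((2 * M) ^ 2) * ∑' m : ℤ, ENNReal.ofReal (‖e m‖ ^ 2) :=
  matrix_A_bounded_general V M hV h hh R hR x
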